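/- arXiv:2504.09573 — 4 statements merged into one kernel-verified Lean document; each statement's English description precedes it below -/
import Mathlib

section
/- For every integer t ≥ 2 and every integer d with 1 ≤ d ≤ t/2, there exists g ∈ G^{(t)} such that d/2 ≤ g ≤ d, where G^{(t)} is the dynamic geometric grid. -/
/-- Left grid element of the dynamic geometric grid. -/
def gL (t j : ℕ) : ℕ := 2 ^ j + (t - 1) % 2 ^ (j - 1)

/-- Right grid element of the dynamic geometric grid. -/
def gR (t j : ℕ) : ℕ := gL t j + 2 ^ (j - 1)

/-- The dynamic geometric grid `G^{(t)}`. -/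
def dynGrid (t : ℕ) : Finset ℕ :=
  {1} ∪ (Finset.Icc 1 (Nat.log 2 ((t - 1) / 3) + 1)).image (gL t)
      ∪ (Finset.Icc 1 (Nat.log 2 (t - 1) - 1)).image (gR t)

/-! For `2·2^i ≤ d < 4·2^i`, the level-`(i+1)` elements `gL ∈ [2·2^i, 3·2^i)` and
`gR ∈ [3·2^i, 4·2^i)` lie in `[d/2, 4·2^i)`, so one of them works unless `d < gL`.
In that case `(t-1) mod 2^i ≠ 0`, hence `i ≥ 1`, and the level-`i` element `gR ∈ [3·2^(i-1), 2^(i+1))`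
works since `d < gL < 3·2^i`. The size condition `2d ≤ t` puts all these indices in range. -/

lemma gL_succ (t i : ℕ) : gL t (i + 1) = 2 * 2 ^ i + (t - 1) % 2 ^ i := by
  simp [gL, pow_succ, mul_comm]

lemma gR_succ (t i : ℕ) : gR t (i + 1) = 3 * 2 ^ i + (t - 1) % 2 ^ i := by
  rw [gR, gL_succ, Nat.add_sub_cancel]
  ring

lemma one_mem_dynGrid (t : ℕ) : 1 ∈ dynGrid t := by
  simp [dynGrid]

lemma gL_succ_mem_dynGrid {t i : ℕ} (h : 3 * 2 ^ i ≤ t - 1) : gL t (i + 1) ∈ dynGrid t := by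
  have hi : i ≤ Nat.log 2 ((t - 1) / 3) :=
    Nat.le_log_of_pow_le one_lt_two ((Nat.le_div_iff_mul_le three_pos).mpr (by omega))
  simp only [dynGrid, Finset.mem_union, Finset.mem_image, Finset.mem_Icc]
  exact Or.inl (Or.inr ⟨i + 1, ⟨by omega, by omega⟩, rfl⟩)

lemma gR_succ_mem_dynGrid {t i : ℕ} (h : 4 * 2 ^ i ≤ t - 1) : gR t (i + 1) ∈ dynGrid t := by
  have hi : i + 2 ≤ Nat.log 2 (t - 1) :=
    Nat.le_log_of_pow_le one_lt_two (by rw [pow_add]; omega)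
  simp only [dynGrid, Finset.mem_union, Finset.mem_image, Finset.mem_Icc]
  exact Or.inr ⟨i + 1, ⟨by omega, by omega⟩, rfl⟩

lemma exists_mem_dynGrid_of_two_pow_le {t d i : ℕ} (hdt : 2 * d ≤ t)
    (hlow : 2 * 2 ^ i ≤ d) (hhigh : d < 4 * 2 ^ i) :
    ∃ g ∈ dynGrid t, d ≤ 2 * g ∧ g ≤ d := by
  have hr : (t - 1) % 2 ^ i < 2 ^ i := Nat.mod_lt _ (Nat.two_pow_pos i)
  have hL := gL_succ t i
  have hR := gR_succ t i
  by_cases hRd : gR t (i + 1) ≤ d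
  · exact ⟨gR t (i + 1), gR_succ_mem_dynGrid (by omega), by omega, hRd⟩
  by_cases hLd : gL t (i + 1) ≤ d
  · exact ⟨gL t (i + 1), gL_succ_mem_dynGrid (by omega), by omega, hLd⟩
  obtain _ | k := i
  · rw [pow_zero, Nat.mod_one] at hL
    omega
  have hr' : (t - 1) % 2 ^ k < 2 ^ k := Nat.mod_lt _ (Nat.two_pow_pos k)
  have hR' := gR_succ t k
  have hpow : 2 ^ (k + 1) = 2 * 2 ^ k := pow_succ' 2 k
  exact ⟨gR t (k + 1), gR_succ_mem_dynGrid (by omega), by omega, by omega⟩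

theorem grid_geometric_spacing_general (t d : ℕ) (hd1 : 1 ≤ d) (hd2 : 2 * d ≤ t) :
    ∃ g ∈ dynGrid t, d ≤ 2 * g ∧ g ≤ d := by
  rcases Nat.lt_or_ge d 2 with hd | hd
  · exact ⟨1, one_mem_dynGrid t, by omega, hd1⟩
  obtain ⟨i, hi⟩ : ∃ i, Nat.log 2 d = i + 1 :=
    Nat.exists_eq_add_one.mpr (Nat.log_pos one_lt_two hd)
  have hlow := Nat.pow_log_le_self 2 (x := d) (by omega)
  have hhigh := Nat.lt_pow_succ_log_self one_lt_two d
  rw [hi, pow_succ'] at hlow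
  rw [hi, pow_succ', pow_succ'] at hhigh
  exact exists_mem_dynGrid_of_two_pow_le hd2 hlow (by omega)

theorem grid_geometric_spacing (t d : ℕ) (ht : 2 ≤ t) (hd1 : 1 ≤ d) (hd2 : 2 * d ≤ t) :
    ∃ g ∈ dynGrid t, d ≤ 2 * g ∧ g ≤ d :=
  grid_geometric_spacing_general t d hd1 hd2
end

section
/- For every integer t ≥ 2, the dynamic geometric grid satisfies the recycling property: (G^{(t+1)} \ {1}) − 1 ⊆ G^{(t)}, i.e., for every g ∈ G^{(t+1)} with g > 1, the integer g − 1 belongs to G^{(t)}. Equivalently, { t+1−g : g ∈ G^{(t+1)} } ⊆ { t−g : g ∈ G^{(t)} } ∪ {t}. -/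
/-!
Write `r = t mod 2^(j-1)`, so that `g_{L,j}^{(t+1)} = 2^j + r` and `g_{R,j}^{(t+1)} = 3·2^(j-1) + r`.
If `r > 0`, subtracting one replaces `r` by `(t-1) mod 2^(j-1) = r - 1`, giving `g_{L,j}^{(t)}`
resp. `g_{R,j}^{(t)}`; the index `j` stays admissible for `t` because the boundary values
`t = 3·2^(j-1)` and `t = 2^(j+1)` have `r = 0`. If `r = 0`, the residue wraps around to
`2^(j-1) - 1`, and `g_{L,j}^{(t+1)} - 1 = 2^j - 1 = g_{R,j-1}^{(t)}` (or `1` when `j = 1`), while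
`g_{R,j}^{(t+1)} - 1 = 3·2^(j-1) - 1 = g_{L,j}^{(t)}`.
-/

namespace Nat

lemma sub_one_mod_of_not_dvd {t n : ℕ} (h : ¬ n ∣ t) : (t - 1) % n = t % n - 1 := by
  rcases Nat.eq_zero_or_pos n with rfl | hn
  · simp
  have hr : 0 < t % n := Nat.pos_of_ne_zero fun h0 => h (Nat.dvd_of_mod_eq_zero h0)
  have hsplit : t - 1 = (t % n - 1) + n * (t / n) := by
    have := Nat.div_add_mod t n
    omega
  rw [hsplit, Nat.add_mul_mod_self_left, Nat.mod_eq_of_lt (by have := Nat.mod_lt t hn; omega)]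

lemma sub_one_mod_of_dvd {t n : ℕ} (ht : t ≠ 0) (h : n ∣ t) : (t - 1) % n = n - 1 := by
  obtain ⟨k, rfl⟩ := h
  obtain ⟨k, rfl⟩ := Nat.exists_eq_add_one_of_ne_zero (right_ne_zero_of_mul ht)
  have hn : 0 < n := Nat.pos_of_ne_zero (left_ne_zero_of_mul ht)
  have hsplit : n * (k + 1) - 1 = (n - 1) + n * k := by
    rw [Nat.mul_succ]
    omega
  rw [hsplit, Nat.add_mul_mod_self_left, Nat.mod_eq_of_lt (by omega)]

lemma pow_le_of_pos_of_le_log {b x y : ℕ} (hx : 0 < x) (h : x ≤ log b y) : b ^ x ≤ y :=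
  pow_le_of_le_log (by rintro rfl; simp at h; omega) h

end Nat

lemma gL_succ_sub_one {t j : ℕ} (h : ¬ 2 ^ (j - 1) ∣ t) : gL (t + 1) j - 1 = gL t j := by
  have hr : t % 2 ^ (j - 1) ≠ 0 := fun h0 => h (Nat.dvd_of_mod_eq_zero h0)
  simp only [gL, Nat.add_sub_cancel, Nat.sub_one_mod_of_not_dvd h]
  generalize t % 2 ^ (j - 1) = r at hr ⊢
  have : 0 < 2 ^ j := by positivity
  omega

lemma gR_succ_sub_one {t j : ℕ} (h : ¬ 2 ^ (j - 1) ∣ t) : gR (t + 1) j - 1 = gR t j := by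
  have hr : t % 2 ^ (j - 1) ≠ 0 := fun h0 => h (Nat.dvd_of_mod_eq_zero h0)
  simp only [gR, gL, Nat.add_sub_cancel, Nat.sub_one_mod_of_not_dvd h]
  generalize t % 2 ^ (j - 1) = r at hr ⊢
  have : 0 < 2 ^ j := by positivity
  omega

lemma gL_succ_sub_one_of_dvd {t j : ℕ} (ht : t ≠ 0) (hj : 2 ≤ j) (h : 2 ^ (j - 1) ∣ t) :
    gL (t + 1) j - 1 = gR t (j - 1) := by
  obtain ⟨k, rfl⟩ := Nat.exists_eq_add_of_le' hj
  unfold gR gL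
  simp only [show k + 2 - 1 = k + 1 from rfl, Nat.add_sub_cancel] at h ⊢
  have h' : 2 ^ k ∣ t := (pow_dvd_pow 2 k.le_succ).trans h
  rw [Nat.mod_eq_zero_of_dvd h, Nat.sub_one_mod_of_dvd ht h', pow_succ, pow_succ]
  have : 0 < 2 ^ k := by positivity
  omega

lemma gR_succ_sub_one_of_dvd {t j : ℕ} (ht : t ≠ 0) (h : 2 ^ (j - 1) ∣ t) :
    gR (t + 1) j - 1 = gL t j := by
  simp only [gR, gL, Nat.add_sub_cancel, Nat.mod_eq_zero_of_dvd h, Nat.sub_one_mod_of_dvd ht h]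
  have : 0 < 2 ^ (j - 1) := by positivity
  have : 0 < 2 ^ j := by positivity
  omega

lemma gL_mem_dynGrid {t j : ℕ} (hj : 1 ≤ j) (h : 3 * 2 ^ (j - 1) < t) : gL t j ∈ dynGrid t := by
  have hlog : j - 1 ≤ Nat.log 2 ((t - 1) / 3) :=
    Nat.le_log_of_pow_le one_lt_two ((Nat.le_div_iff_mul_le three_pos).2 (by omega))
  simp only [dynGrid, Finset.mem_union, Finset.mem_image, Finset.mem_Icc]
  exact Or.inl (Or.inr ⟨j, ⟨hj, by omega⟩, rfl⟩)

lemma gR_mem_dynGrid {t j : ℕ} (hj : 1 ≤ j) (h : 2 ^ (j + 1) < t) : gR t j ∈ dynGrid t := by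
  have hlog : j + 1 ≤ Nat.log 2 (t - 1) := Nat.le_log_of_pow_le one_lt_two (by omega)
  simp only [dynGrid, Finset.mem_union, Finset.mem_image, Finset.mem_Icc]
  exact Or.inr ⟨j, ⟨hj, by omega⟩, rfl⟩

lemma three_mul_pow_le_of_le_log {t j : ℕ} (hj : 2 ≤ j) (h : j ≤ Nat.log 2 (t / 3) + 1) :
    3 * 2 ^ (j - 1) ≤ t := by
  have := Nat.pow_le_of_pos_of_le_log (b := 2) (y := t / 3) (by omega : 0 < j - 1) (by omega)
  have := Nat.div_mul_le_self t 3
  omega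

lemma pow_succ_le_of_le_log_sub_one {t j : ℕ} (hj : 1 ≤ j) (h : j ≤ Nat.log 2 t - 1) :
    2 ^ (j + 1) ≤ t :=
  Nat.pow_le_of_pos_of_le_log j.succ_pos (by omega)

lemma gL_succ_sub_one_mem_dynGrid {t j : ℕ} (hj : 1 ≤ j) (hjt : j ≤ Nat.log 2 (t / 3) + 1) :
    gL (t + 1) j - 1 ∈ dynGrid t := by
  rcases hj.eq_or_lt with rfl | hj2
  · simp [gL, dynGrid, Nat.mod_one]
  have ht := three_mul_pow_le_of_le_log hj2 hjt
  have hpow : 0 < 2 ^ (j - 1) := by positivity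
  by_cases hdvd : 2 ^ (j - 1) ∣ t
  · rw [gL_succ_sub_one_of_dvd (by omega) hj2 hdvd]
    refine gR_mem_dynGrid (by omega) ?_
    rw [Nat.sub_add_cancel hj, ← Nat.two_pow_pred_add_two_pow_pred (by omega)]
    omega
  · have hne : t ≠ 3 * 2 ^ (j - 1) := fun he => hdvd (he ▸ dvd_mul_left _ _)
    rw [gL_succ_sub_one hdvd]
    exact gL_mem_dynGrid hj (lt_of_le_of_ne ht hne.symm)

lemma gR_succ_sub_one_mem_dynGrid {t j : ℕ} (hj : 1 ≤ j) (hjt : j ≤ Nat.log 2 t - 1) :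
    gR (t + 1) j - 1 ∈ dynGrid t := by
  have ht := pow_succ_le_of_le_log_sub_one hj hjt
  have hpow : 2 ^ (j + 1) = 4 * 2 ^ (j - 1) := by
    rw [show j + 1 = j - 1 + 2 by omega, pow_add]
    ring
  have hpos : 0 < 2 ^ (j - 1) := by positivity
  by_cases hdvd : 2 ^ (j - 1) ∣ t
  · rw [gR_succ_sub_one_of_dvd (by omega) hdvd]
    exact gL_mem_dynGrid hj (by omega)
  · have hne : t ≠ 2 ^ (j + 1) := fun he => hdvd (he ▸ pow_dvd_pow 2 (by omega))
    rw [gR_succ_sub_one hdvd]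
    exact gR_mem_dynGrid hj (lt_of_le_of_ne ht hne.symm)

theorem grid_recycling_general (t : ℕ) :
    ∀ g ∈ dynGrid (t + 1), 1 < g → g - 1 ∈ dynGrid t := by
  intro g hg hg1
  simp only [dynGrid, Finset.mem_union, Finset.mem_singleton, Finset.mem_image, Finset.mem_Icc,
    Nat.add_sub_cancel] at hg
  rcases hg with (rfl | ⟨j, ⟨hj, hjt⟩, rfl⟩) | ⟨j, ⟨hj, hjt⟩, rfl⟩
  · exact absurd hg1 (lt_irrefl 1)
  · exact gL_succ_sub_one_mem_dynGrid hj hjt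
  · exact gR_succ_sub_one_mem_dynGrid hj hjt

theorem grid_recycling (t : ℕ) (ht : 2 ≤ t) :
    ∀ g ∈ dynGrid (t + 1), 1 < g → g - 1 ∈ dynGrid t :=
  grid_recycling_general t
end

section
/- Let t and τ be positive integers with τ < t ≤ 2τ, and let g be an integer with (t−τ)/2 ≤ g ≤ t−τ. Then g·τ²/(t·(t−g)) ≥ (t−τ)/8, and consequently τ/(t−g) ≥ 2/3. -/
/-!
Write `d = t - τ`, so `0 < d ≤ τ` and `d / 2 ≤ g ≤ d`. Then `τ ≤ t - g ≤ τ + d / 2 ≤ 3τ / 2`,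
which gives `τ / (t - g) ≥ 2 / 3` at once, and together with `t ≤ 2τ` also
`τ² / (t (t - g)) ≥ τ² / (2τ · 3τ / 2) = 1 / 3`; multiplying by `g ≥ d / 2` yields
`g τ² / (t (t - g)) ≥ d / 6 ≥ d / 8`.
-/

namespace SignalPreservation

variable {α : Type*} [Field α] [LinearOrder α] [IsStrictOrderedRing α] {t τ g : α}

lemma sub_le_three_halves_mul (ht : t ≤ 2 * τ) (hg1 : (t - τ) / 2 ≤ g) :
    t - g ≤ 3 / 2 * τ := by
  linarith

lemma two_thirds_le_div_sub (hτt : τ < t) (ht : t ≤ 2 * τ)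
    (hg1 : (t - τ) / 2 ≤ g) (hg2 : g ≤ t - τ) :
    2 / 3 ≤ τ / (t - g) := by
  have hτ : 0 < τ := by linarith
  have hτg : τ ≤ t - g := le_sub_comm.mp hg2
  have htg := sub_le_three_halves_mul ht hg1
  rw [le_div_iff₀ (by linarith)]
  linarith

lemma one_third_le_sq_div_mul_sub (hτt : τ < t) (ht : t ≤ 2 * τ)
    (hg1 : (t - τ) / 2 ≤ g) (hg2 : g ≤ t - τ) :
    1 / 3 ≤ τ ^ 2 / (t * (t - g)) := by
  have hτ : 0 < τ := by linarith
  have hτg : τ ≤ t - g := le_sub_comm.mp hg2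
  have htg := sub_le_three_halves_mul ht hg1
  have hden : t * (t - g) ≤ 3 * τ ^ 2 :=
    calc t * (t - g) ≤ (2 * τ) * (3 / 2 * τ) := by gcongr; linarith
      _ = 3 * τ ^ 2 := by ring
  rw [le_div_iff₀ (by nlinarith)]
  linarith

lemma sub_div_six_le_signal (hτt : τ < t) (ht : t ≤ 2 * τ)
    (hg1 : (t - τ) / 2 ≤ g) (hg2 : g ≤ t - τ) :
    (t - τ) / 6 ≤ g * τ ^ 2 / (t * (t - g)) :=
  calc (t - τ) / 6 = (t - τ) / 2 * (1 / 3) := by ring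
    _ ≤ g * (τ ^ 2 / (t * (t - g))) :=
        mul_le_mul hg1 (one_third_le_sq_div_mul_sub hτt ht hg1 hg2) (by norm_num)
          (by linarith)
    _ = g * τ ^ 2 / (t * (t - g)) := (mul_div_assoc ..).symm

end SignalPreservation

open SignalPreservation in
theorem signal_preservation_general (t τ g : ℕ) (hτt : τ < t) (ht : t ≤ 2 * τ)
    (hg1 : ((t : ℝ) - (τ : ℝ)) / 2 ≤ (g : ℝ)) (hg2 : g ≤ t - τ) :
    ((g : ℝ) * (τ : ℝ) ^ 2 / ((t : ℝ) * ((t : ℝ) - (g : ℝ))) ≥ ((t : ℝ) - (τ : ℝ)) / 8) ∧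
      ((τ : ℝ) / ((t : ℝ) - (g : ℝ)) ≥ 2 / 3) := by
  have hτt' : (τ : ℝ) < t := by exact_mod_cast hτt
  have ht' : (t : ℝ) ≤ 2 * τ := by exact_mod_cast ht
  have hg2' : (g : ℝ) ≤ t - τ := by
    rw [← Nat.cast_sub hτt.le]
    exact_mod_cast hg2
  refine ⟨?_, two_thirds_le_div_sub hτt' ht' hg1 hg2'⟩
  calc ((t : ℝ) - τ) / 8 ≤ ((t : ℝ) - τ) / 6 := by gcongr; linarith
    _ ≤ _ := sub_div_six_le_signal hτt' ht' hg1 hg2'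

theorem signal_preservation (t τ g : ℕ) (hτ : 0 < τ) (hτt : τ < t) (ht : t ≤ 2 * τ)
    (hg1 : ((t : ℝ) - (τ : ℝ)) / 2 ≤ (g : ℝ)) (hg2 : g ≤ t - τ) :
    ((g : ℝ) * (τ : ℝ) ^ 2 / ((t : ℝ) * ((t : ℝ) - (g : ℝ))) ≥ ((t : ℝ) - (τ : ℝ)) / 8) ∧
      ((τ : ℝ) / ((t : ℝ) - (g : ℝ)) ≥ 2 / 3) :=
  signal_preservation_general t τ g hτt ht hg1 hg2
end

section
/- Let a ≥ 0 and let Z be a standard normal random variable. Define ν_a = E[Z² | |Z| ≥ a]. Then a² + 1 ≤ ν_a ≤ a² + 2. -/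
open MeasureTheory ProbabilityTheory Real Set Filter Topology
open scoped NNReal

/-! With `φ` the standard normal density and `Q a = ∫ x in Ioi a, φ x`, symmetry turns the
truncated second moment into `(∫ x in Ioi a, x ^ 2 * φ x) / Q a`, and integrating
`(x φ x)' = (1 - x ^ 2) φ x` by parts gives `∫ x in Ioi a, x ^ 2 * φ x = a φ a + Q a`.
Both bounds are then Mills-ratio inequalities, each the positivity of an integral over `Ioi a`:
`∫ (x - a) φ x = φ a - a Q a` and `∫ (x - a) ^ 2 φ x = (a ^ 2 + 1) Q a - a φ a`. -/

lemma Function.Even.setIntegral_setOf_le_abs {f : ℝ → ℝ} (hf : Function.Even f) {a : ℝ}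
    (ha : 0 ≤ a) :
    ∫ x in {x | a ≤ |x|}, f x = 2 * ∫ x in Ioi a, f x := by
  have hf_abs : ∀ x, f |x| = f x := fun x => by
    rcases abs_cases x with ⟨h, _⟩ | ⟨h, _⟩ <;> simp [h, hf x]
  have h_ind : {x | a ≤ |x|}.indicator f = fun x => (Ici a).indicator f |x| := by
    ext x; simp [indicator, hf_abs]
  rw [← integral_indicator (measurableSet_le measurable_const measurable_abs), h_ind,
    integral_comp_abs, ← integral_Ici_eq_integral_Ioi, setIntegral_indicator measurableSet_Ici,
    Ici_inter_Ici, max_eq_right ha, integral_Ici_eq_integral_Ioi]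

lemma setIntegral_gaussianReal_eq_setIntegral_mul {μ : ℝ} {v : ℝ≥0} (hv : v ≠ 0) {s : Set ℝ}
    (hs : MeasurableSet s) (f : ℝ → ℝ) :
    ∫ x in s, f x ∂gaussianReal μ v = ∫ x in s, f x * gaussianPDFReal μ v x := by
  rw [← integral_indicator hs, integral_gaussianReal_eq_integral_smul hv, ← integral_indicator hs]
  congr 1 with x
  by_cases hx : x ∈ s <;> simp [hx, mul_comm]

lemma even_gaussianPDFReal_zero (v : ℝ≥0) : Function.Even (gaussianPDFReal 0 v) := fun x => by
  simp [gaussianPDFReal]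

lemma setIntegral_setOf_le_abs_gaussianReal {v : ℝ≥0} (hv : v ≠ 0) {f : ℝ → ℝ}
    (hf : Function.Even f) {a : ℝ} (ha : 0 ≤ a) :
    ∫ x in {x | a ≤ |x|}, f x ∂gaussianReal 0 v =
      2 * ∫ x in Ioi a, f x * gaussianPDFReal 0 v x := by
  rw [setIntegral_gaussianReal_eq_setIntegral_mul hv
    (measurableSet_le measurable_const measurable_abs)]
  exact Function.Even.setIntegral_setOf_le_abs
    (fun x => by simp only [hf x, even_gaussianPDFReal_zero v x]) ha

lemma hasDerivAt_gaussianPDFReal (μ : ℝ) (v : ℝ≥0) (x : ℝ) :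
    HasDerivAt (gaussianPDFReal μ v) (-(x - μ) / v * gaussianPDFReal μ v x) x := by
  have h := ((((hasDerivAt_id' x).sub_const μ).fun_pow 2).fun_neg.div_const
    (2 * (v : ℝ))).exp.const_mul (√(2 * π * v))⁻¹
  refine h.congr_deriv ?_
  simp only [gaussianPDFReal]
  ring

local notation "φ" => gaussianPDFReal 0 1

lemma gaussianPDFReal_zero_one_apply (x : ℝ) : φ x = (√(2 * π))⁻¹ * rexp (-(1 / 2) * x ^ 2) := by
  simp only [gaussianPDFReal]; push_cast; ring_nf

lemma integrable_pow_mul_gaussianPDFReal (n : ℕ) : Integrable fun x => x ^ n * φ x := by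
  refine ((integrable_rpow_mul_exp_neg_mul_sq (by norm_num : (0 : ℝ) < 1 / 2)
    (by linarith [n.cast_nonneg (α := ℝ)] : (-1 : ℝ) < n)).const_mul (√(2 * π))⁻¹).congr
    (Eventually.of_forall fun x => ?_)
  simp only [gaussianPDFReal_zero_one_apply, rpow_natCast]; ring

lemma integrable_mul_gaussianPDFReal : Integrable fun x => x * φ x := by
  simpa using integrable_pow_mul_gaussianPDFReal 1

lemma integrable_sq_sub_one_mul_gaussianPDFReal : Integrable fun x => (x ^ 2 - 1) * φ x := by
  simpa only [sub_mul, one_mul] using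
    (integrable_pow_mul_gaussianPDFReal 2).sub' (integrable_gaussianPDFReal 0 1)

lemma tendsto_pow_mul_gaussianPDFReal (n : ℕ) :
    Tendsto (fun x => x ^ n * φ x) atTop (𝓝 0) := by
  have h := ((tendsto_rpow_abs_mul_exp_neg_mul_sq_cocompact (by norm_num : (0 : ℝ) < 1 / 2)
    n).mono_left atTop_le_cocompact).const_mul (√(2 * π))⁻¹
  rw [mul_zero] at h
  refine h.congr' ((eventually_ge_atTop 0).mono fun x hx => ?_)
  simp only [gaussianPDFReal_zero_one_apply, abs_of_nonneg hx, rpow_natCast]; ring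

lemma integral_Ioi_mul_gaussianPDFReal (a : ℝ) : ∫ x in Ioi a, x * φ x = φ a := by
  have h := integral_Ioi_of_hasDerivAt_of_tendsto' (a := a) (f := fun x => -φ x)
    (f' := fun x => x * φ x)
    (fun x _ => by simpa using (hasDerivAt_gaussianPDFReal 0 1 x).fun_neg)
    integrable_mul_gaussianPDFReal.integrableOn
    (by simpa using (tendsto_pow_mul_gaussianPDFReal 0).neg)
  simpa using h

lemma integral_Ioi_sq_sub_one_mul_gaussianPDFReal (a : ℝ) :
    ∫ x in Ioi a, (x ^ 2 - 1) * φ x = a * φ a := by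
  have h := integral_Ioi_of_hasDerivAt_of_tendsto' (a := a) (f := fun x => -(x * φ x))
    (f' := fun x => (x ^ 2 - 1) * φ x)
    (fun x _ => by
      refine ((hasDerivAt_id' x).fun_mul (hasDerivAt_gaussianPDFReal 0 1 x)).fun_neg.congr_deriv ?_
      simp only [NNReal.coe_one, sub_zero, div_one]; ring)
    integrable_sq_sub_one_mul_gaussianPDFReal.integrableOn
    (by simpa using (tendsto_pow_mul_gaussianPDFReal 1).neg)
  simpa using h

lemma integral_Ioi_sq_mul_gaussianPDFReal (a : ℝ) :
    ∫ x in Ioi a, x ^ 2 * φ x = a * φ a + ∫ x in Ioi a, φ x := by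
  rw [← integral_Ioi_sq_sub_one_mul_gaussianPDFReal, ← integral_add]
  · simp only [sub_mul, one_mul, sub_add_cancel]
  · exact integrable_sq_sub_one_mul_gaussianPDFReal.integrableOn
  · exact (integrable_gaussianPDFReal 0 1).integrableOn

lemma integral_Ioi_gaussianPDFReal_pos (a : ℝ) : 0 < ∫ x in Ioi a, φ x := by
  rw [setIntegral_pos_iff_support_of_nonneg_ae
    (Eventually.of_forall (gaussianPDFReal_nonneg 0 1))
    (integrable_gaussianPDFReal 0 1).integrableOn,
    (inter_eq_right (s := Function.support φ)).2 fun x _ =>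
      (gaussianPDFReal_pos 0 1 x one_ne_zero).ne',
    Real.volume_Ioi]
  exact ENNReal.zero_lt_top

lemma mul_integral_Ioi_gaussianPDFReal_le (a : ℝ) : a * ∫ x in Ioi a, φ x ≤ φ a := by
  rw [← integral_Ioi_mul_gaussianPDFReal, ← integral_const_mul]
  refine setIntegral_mono_on ((integrable_gaussianPDFReal 0 1).integrableOn.const_mul a)
    integrable_mul_gaussianPDFReal.integrableOn measurableSet_Ioi
    fun x hx => ?_
  exact mul_le_mul_of_nonneg_right (le_of_lt hx) (gaussianPDFReal_nonneg 0 1 x)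

lemma integral_Ioi_sub_sq_mul_gaussianPDFReal (a : ℝ) :
    ∫ x in Ioi a, (x - a) ^ 2 * φ x = (a ^ 2 + 1) * (∫ x in Ioi a, φ x) - a * φ a := by
  have h1 := integrable_sq_sub_one_mul_gaussianPDFReal
  have h2 := integrable_mul_gaussianPDFReal.const_mul (2 * a)
  have h3 := (integrable_gaussianPDFReal 0 1).const_mul (a ^ 2 + 1)
  calc _ = ∫ x in Ioi a, ((x ^ 2 - 1) * φ x - 2 * a * (x * φ x) + (a ^ 2 + 1) * φ x) := by
        congr 1 with x; ring
    _ = a * φ a - 2 * a * φ a + (a ^ 2 + 1) * ∫ x in Ioi a, φ x := by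
        rw [integral_add (h1.sub' h2).integrableOn h3.integrableOn,
          integral_sub h1.integrableOn h2.integrableOn, integral_const_mul, integral_const_mul,
          integral_Ioi_sq_sub_one_mul_gaussianPDFReal, integral_Ioi_mul_gaussianPDFReal]
    _ = _ := by ring

lemma mul_gaussianPDFReal_le_mul_integral_Ioi (a : ℝ) :
    a * φ a ≤ (a ^ 2 + 1) * ∫ x in Ioi a, φ x := by
  rw [← sub_nonneg, ← integral_Ioi_sub_sq_mul_gaussianPDFReal]
  exact setIntegral_nonneg measurableSet_Ioi fun x _ =>
    mul_nonneg (sq_nonneg _) (gaussianPDFReal_nonneg 0 1 x)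

theorem truncated_gaussian_second_moment (a : ℝ) (ha : 0 ≤ a) :
    a ^ 2 + 1 ≤ (∫ x in {x : ℝ | a ≤ |x|}, x ^ 2 ∂(gaussianReal 0 1)) /
        ((gaussianReal 0 1) {x : ℝ | a ≤ |x|}).toReal ∧
      (∫ x in {x : ℝ | a ≤ |x|}, x ^ 2 ∂(gaussianReal 0 1)) /
        ((gaussianReal 0 1) {x : ℝ | a ≤ |x|}).toReal ≤ a ^ 2 + 2 := by
  have hQ := integral_Ioi_gaussianPDFReal_pos a
  have hnum : ∫ x in {x : ℝ | a ≤ |x|}, x ^ 2 ∂(gaussianReal 0 1)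
      = 2 * (a * φ a + ∫ x in Ioi a, φ x) := by
    rw [setIntegral_setOf_le_abs_gaussianReal one_ne_zero (fun x => even_two.neg_pow x) ha,
      integral_Ioi_sq_mul_gaussianPDFReal]
  have hden : ((gaussianReal 0 1) {x : ℝ | a ≤ |x|}).toReal = 2 * ∫ x in Ioi a, φ x := by
    simpa [measureReal_def] using
      setIntegral_setOf_le_abs_gaussianReal one_ne_zero (f := fun _ => 1) (fun _ => rfl) ha
  rw [hnum, hden, mul_div_mul_left _ _ two_ne_zero, le_div_iff₀ hQ, div_le_iff₀ hQ]
  constructor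
  · nlinarith [mul_le_mul_of_nonneg_left (mul_integral_Ioi_gaussianPDFReal_le a) ha]
  · nlinarith [mul_gaussianPDFReal_le_mul_integral_Ioi a]
end
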